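/- arXiv:2010.02022 — 4 statements merged into one kernel-verified Lean document; each statement's English description precedes it below -/
import Mathlib

section
/- Let A : [t₀,t₁] → ℝ^{m×n} be differentiable with A(t) = U(t) S(t) V(t)ᵀ of rank r for all t, where U(t), V(t) have orthonormal columns and S(t) is invertible. Let K(t) solve K'(t) = A'(t) V₀ with K(t₀) = U₀ S₀, where U₀ = U(t₀), V₀ = V(t₀), S₀ = S(t₀). Then K(t₁) = A(t₁) V₀, and if V(t₁)ᵀ V(t₀) is invertible, then K(t₁) = U(t₁) [S(t₁) (V(t₁)ᵀ V(t₀))] where the bracketed r×r factor is invertible. -/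
attribute [local instance] Matrix.frobeniusNormedAddCommGroup Matrix.frobeniusNormedSpace

open Matrix

/-!
The `K`-step equation `K' = A' V₀` has right-hand side independent of `K`, and `t ↦ A t V₀`
solves it with the same initial value `A(t₀) V₀ = U₀ S₀ V₀ᵀ V₀ = U₀ S₀`; by uniqueness
`K(t₁) = A(t₁) V₀ = U(t₁) S(t₁) (V(t₁)ᵀ V₀)`, a product of invertible factors on the right.
-/

theorem eq_on_Icc_of_hasDerivAt_eq {E : Type*} [NormedAddCommGroup E] [NormedSpace ℝ E]
    {f g f' : ℝ → E} {a b : ℝ}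
    (hf : ∀ t ∈ Set.Icc a b, HasDerivAt f (f' t) t)
    (hg : ∀ t ∈ Set.Icc a b, HasDerivAt g (f' t) t) (hfg : f a = g a) :
    ∀ t ∈ Set.Icc a b, f t = g t :=
  eq_of_has_deriv_right_eq
    (fun t ht => (hf t (Set.mem_Icc_of_Ico ht)).hasDerivWithinAt)
    (fun t ht => (hg t (Set.mem_Icc_of_Ico ht)).hasDerivWithinAt)
    (fun t ht => (hf t ht).continuousAt.continuousWithinAt)
    (fun t ht => (hg t ht).continuousAt.continuousWithinAt) hfg

theorem HasDerivAt.matrix_mul_const {𝕜 l m n : Type*} [NontriviallyNormedField 𝕜] [CompleteSpace 𝕜]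
    [Fintype l] [Fintype m] [Fintype n]
    {A : 𝕜 → Matrix l m 𝕜} {A' : Matrix l m 𝕜} {t : 𝕜} (hA : HasDerivAt A A' t)
    (M : Matrix m n 𝕜) : HasDerivAt (fun s => A s * M) (A' * M) t :=
  (mulRightLinearMap l 𝕜 M).toContinuousLinearMap.hasFDerivAt.comp_hasDerivAt t hA

theorem stmt1_general {m n r : ℕ} (t₀ t₁ : ℝ) (ht : t₀ ≤ t₁)
    (A A' : ℝ → Matrix (Fin m) (Fin n) ℝ)
    (U : ℝ → Matrix (Fin m) (Fin r) ℝ)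
    (S : ℝ → Matrix (Fin r) (Fin r) ℝ)
    (V : ℝ → Matrix (Fin n) (Fin r) ℝ)
    (hderiv : ∀ t ∈ Set.Icc t₀ t₁, HasDerivAt A (A' t) t)
    (hfac : ∀ t ∈ Set.Icc t₀ t₁, A t = U t * S t * (V t)ᵀ)
    (hV : ∀ t ∈ Set.Icc t₀ t₁, (V t)ᵀ * V t = 1)
    (hS : ∀ t ∈ Set.Icc t₀ t₁, Invertible (S t))
    (K : ℝ → Matrix (Fin m) (Fin r) ℝ)
    (hK0 : K t₀ = U t₀ * S t₀)
    (hKderiv : ∀ t ∈ Set.Icc t₀ t₁, HasDerivAt K (A' t * V t₀) t) :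
    K t₁ = A t₁ * V t₀ ∧
      (Invertible ((V t₁)ᵀ * V t₀) →
        K t₁ = U t₁ * (S t₁ * ((V t₁)ᵀ * V t₀)) ∧
          IsUnit (S t₁ * ((V t₁)ᵀ * V t₀))) := by
  have ht₀ : t₀ ∈ Set.Icc t₀ t₁ := Set.left_mem_Icc.2 ht
  have ht₁ : t₁ ∈ Set.Icc t₀ t₁ := Set.right_mem_Icc.2 ht
  have hK₀ : K t₀ = A t₀ * V t₀ := by
    rw [hK0, hfac t₀ ht₀, Matrix.mul_assoc (U t₀ * S t₀), hV t₀ ht₀, Matrix.mul_one]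
  have hK₁ : K t₁ = A t₁ * V t₀ :=
    eq_on_Icc_of_hasDerivAt_eq hKderiv
      (fun t ht => (hderiv t ht).matrix_mul_const (V t₀)) hK₀ t₁ ht₁
  refine ⟨hK₁, fun hVV => ⟨?_, ?_⟩⟩
  · rw [hK₁, hfac t₁ ht₁]
    simp only [Matrix.mul_assoc]
  · have := hS t₁ ht₁
    exact (isUnit_of_invertible (S t₁)).mul (isUnit_of_invertible _)

/-- The K-step with `F(t,Y) = A'(t)` satisfies `K(t₁) = A(t₁) V₀`, and if
`V(t₁)ᵀ V(t₀)` is invertible, `K(t₁) = U(t₁) [S(t₁)(V(t₁)ᵀ V(t₀))]` with invertible bracket. -/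
theorem stmt1 {m n r : ℕ} (t₀ t₁ : ℝ) (ht : t₀ ≤ t₁)
    (A A' : ℝ → Matrix (Fin m) (Fin n) ℝ)
    (U : ℝ → Matrix (Fin m) (Fin r) ℝ)
    (S : ℝ → Matrix (Fin r) (Fin r) ℝ)
    (V : ℝ → Matrix (Fin n) (Fin r) ℝ)
    (hderiv : ∀ t ∈ Set.Icc t₀ t₁, HasDerivAt A (A' t) t)
    (hfac : ∀ t ∈ Set.Icc t₀ t₁, A t = U t * S t * (V t)ᵀ)
    (hU : ∀ t ∈ Set.Icc t₀ t₁, (U t)ᵀ * U t = 1)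
    (hV : ∀ t ∈ Set.Icc t₀ t₁, (V t)ᵀ * V t = 1)
    (hS : ∀ t ∈ Set.Icc t₀ t₁, Invertible (S t))
    (hrank : ∀ t ∈ Set.Icc t₀ t₁, (A t).rank = r)
    (K : ℝ → Matrix (Fin m) (Fin r) ℝ)
    (hK0 : K t₀ = U t₀ * S t₀)
    (hKderiv : ∀ t ∈ Set.Icc t₀ t₁, HasDerivAt K (A' t * V t₀) t) :
    K t₁ = A t₁ * V t₀ ∧
      (Invertible ((V t₁)ᵀ * V t₀) →
        K t₁ = U t₁ * (S t₁ * ((V t₁)ᵀ * V t₀)) ∧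
          IsUnit (S t₁ * ((V t₁)ᵀ * V t₀))) :=
  stmt1_general t₀ t₁ ht A A' U S V hderiv hfac hV hS K hK0 hKderiv
end

section
/- Let A : [t₀,t₁] → ℝ^{m×n} be differentiable with A(t) of rank r for all t and factorization A(t) = U(t)S(t)V(t)ᵀ, and assume U(t₁)ᵀU(t₀) and V(t₁)ᵀV(t₀) are invertible. Let Y₀ = A(t₀) = U₀S₀V₀ᵀ. Define K(t₁) = A(t₁)V₀ with QR factorization K(t₁) = U₁R₁, L(t₁) = A(t₁)ᵀU₀ with QR factorization L(t₁) = V₁R̃₁, and S₁ = U₁ᵀ A(t₁) V₁. Then U₁ S₁ V₁ᵀ = A(t₁). -/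
/-!
After one step the new integrator returns `U₁ U₁ᵀ A(t₁) V₁ V₁ᵀ`. Since
`A(t₁) V₀ = U(t₁) (S(t₁) V(t₁)ᵀ V₀)` with an invertible `r × r` factor, the orthonormal `U₁` from
the QR factorization of `K(t₁)` spans the same column space as `U(t₁)`, so `U₁ U₁ᵀ` fixes `U(t₁)`;
likewise `V₁ V₁ᵀ` fixes `V(t₁)`, and both projections leave `A(t₁) = U(t₁) S(t₁) V(t₁)ᵀ` unchanged.
-/

open Matrix

namespace Matrix

variable {m n r r' r'' R : Type*} [Fintype m] [Fintype n] [Fintype r] [CommRing R]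

theorem isUnit_of_mul_eq_mul_of_transpose_mul_self [DecidableEq r] {Q W : Matrix m r R}
    {M N : Matrix r r R} (hQ : Qᵀ * Q = 1) (hM : IsUnit M) (hE : Q * M = W * N) : IsUnit N := by
  have hMN : M = (Qᵀ * W) * N := by
    rw [Matrix.mul_assoc, ← hE, ← Matrix.mul_assoc, hQ, Matrix.one_mul]
  rw [isUnit_iff_isUnit_det, hMN, det_mul] at hM
  exact (isUnit_iff_isUnit_det N).mpr (isUnit_of_mul_isUnit_right hM)

theorem mul_transpose_mul_eq_self_of_eq_mul [DecidableEq r] {Q W : Matrix m r R}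
    {P : Matrix r r R} (hQ : Qᵀ * Q = 1) (hW : Wᵀ * W = 1) (hWQ : W = Q * P) : W * Wᵀ * Q = Q := by
  have hPP : Pᵀ * P = 1 := by
    rwa [hWQ, transpose_mul, Matrix.mul_assoc, ← Matrix.mul_assoc Qᵀ, hQ, Matrix.one_mul] at hW
  calc W * Wᵀ * Q = Q * (P * Pᵀ) * (Qᵀ * Q) := by
        rw [hWQ, transpose_mul]; simp only [Matrix.mul_assoc]
    _ = Q := by rw [mul_eq_one_comm.mp hPP, hQ, Matrix.mul_one, Matrix.mul_one]

theorem mul_transpose_mul_eq_self_of_mul_eq_mul [DecidableEq r] {Q W : Matrix m r R}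
    {M N : Matrix r r R} (hQ : Qᵀ * Q = 1) (hW : Wᵀ * W = 1) (hM : IsUnit M)
    (hE : Q * M = W * N) :
    W * Wᵀ * Q = Q := by
  have hN := (isUnit_iff_isUnit_det N).mp (isUnit_of_mul_eq_mul_of_transpose_mul_self hQ hM hE)
  refine mul_transpose_mul_eq_self_of_eq_mul hQ hW (P := M * N⁻¹) ?_
  rw [← Matrix.mul_assoc, hE, mul_nonsing_inv_cancel_right N W hN]

theorem mul_transpose_mul_mul_mul_transpose_eq [Fintype r'] [Fintype r''] {U₁ : Matrix m r' R}
    {V₁ : Matrix n r'' R} {U : Matrix m r R} {V : Matrix n r R} (S : Matrix r r R)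
    (hU : U₁ * U₁ᵀ * U = U) (hV : V₁ * V₁ᵀ * V = V) :
    U₁ * (U₁ᵀ * (U * S * Vᵀ) * V₁) * V₁ᵀ = U * S * Vᵀ := by
  calc U₁ * (U₁ᵀ * (U * S * Vᵀ) * V₁) * V₁ᵀ = U₁ * U₁ᵀ * U * S * (V₁ * V₁ᵀ * V)ᵀ := by
        simp only [transpose_mul, transpose_transpose, Matrix.mul_assoc]
    _ = U * S * Vᵀ := by rw [hU, hV]

end Matrix

attribute [local instance] Matrix.frobeniusNormedAddCommGroup Matrix.frobeniusNormedSpace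

theorem stmt3_general {m n r : ℕ} (t₀ t₁ : ℝ) (ht : t₀ ≤ t₁)
    (A : ℝ → Matrix (Fin m) (Fin n) ℝ)
    (U : ℝ → Matrix (Fin m) (Fin r) ℝ)
    (S : ℝ → Matrix (Fin r) (Fin r) ℝ)
    (V : ℝ → Matrix (Fin n) (Fin r) ℝ)
    (hfac : ∀ t ∈ Set.Icc t₀ t₁, A t = U t * S t * (V t)ᵀ)
    (hU : ∀ t ∈ Set.Icc t₀ t₁, (U t)ᵀ * U t = 1)
    (hV : ∀ t ∈ Set.Icc t₀ t₁, (V t)ᵀ * V t = 1)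
    (hS : ∀ t ∈ Set.Icc t₀ t₁, Invertible (S t))
    (hUinv : Invertible ((U t₁)ᵀ * U t₀))
    (hVinv : Invertible ((V t₁)ᵀ * V t₀))
    -- QR factorization of K(t₁) = A(t₁) V₀
    (U₁ : Matrix (Fin m) (Fin r) ℝ) (R₁ : Matrix (Fin r) (Fin r) ℝ)
    (hQR_K : A t₁ * V t₀ = U₁ * R₁) (hU₁ : U₁ᵀ * U₁ = 1)
    -- QR factorization of L(t₁) = A(t₁)ᵀ U₀
    (V₁ : Matrix (Fin n) (Fin r) ℝ) (R₁' : Matrix (Fin r) (Fin r) ℝ)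
    (hQR_L : (A t₁)ᵀ * U t₀ = V₁ * R₁') (hV₁ : V₁ᵀ * V₁ = 1)
    -- S-step result
    (S₁ : Matrix (Fin r) (Fin r) ℝ) (hS₁ : S₁ = U₁ᵀ * A t₁ * V₁) :
    U₁ * S₁ * V₁ᵀ = A t₁ := by
  have h₁ : t₁ ∈ Set.Icc t₀ t₁ := ⟨ht, le_rfl⟩
  let _ := hS t₁ h₁
  have hK : U t₁ * (S t₁ * ((V t₁)ᵀ * V t₀)) = U₁ * R₁ := by
    rw [← hQR_K, hfac t₁ h₁]; simp only [Matrix.mul_assoc]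
  have hL : V t₁ * ((S t₁)ᵀ * ((U t₁)ᵀ * U t₀)) = V₁ * R₁' := by
    rw [← hQR_L, hfac t₁ h₁]; simp only [transpose_mul, transpose_transpose, Matrix.mul_assoc]
  have hUU₁ : U₁ * U₁ᵀ * U t₁ = U t₁ := mul_transpose_mul_eq_self_of_mul_eq_mul (hU t₁ h₁) hU₁
    ((isUnit_of_invertible (S t₁)).mul (isUnit_of_invertible _)) hK
  have hVV₁ : V₁ * V₁ᵀ * V t₁ = V t₁ := mul_transpose_mul_eq_self_of_mul_eq_mul (hV t₁ h₁) hV₁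
    ((isUnit_of_invertible (S t₁)ᵀ).mul (isUnit_of_invertible _)) hL
  rw [hS₁, hfac t₁ h₁]
  exact mul_transpose_mul_mul_mul_transpose_eq (S t₁) hUU₁ hVV₁

/-- Exactness of the new low-rank matrix integrator. -/
theorem stmt3 {m n r : ℕ} (t₀ t₁ : ℝ) (ht : t₀ ≤ t₁)
    (A : ℝ → Matrix (Fin m) (Fin n) ℝ)
    (hdiff : ∀ t ∈ Set.Icc t₀ t₁, DifferentiableAt ℝ A t)
    (U : ℝ → Matrix (Fin m) (Fin r) ℝ)
    (S : ℝ → Matrix (Fin r) (Fin r) ℝ)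
    (V : ℝ → Matrix (Fin n) (Fin r) ℝ)
    (hfac : ∀ t ∈ Set.Icc t₀ t₁, A t = U t * S t * (V t)ᵀ)
    (hU : ∀ t ∈ Set.Icc t₀ t₁, (U t)ᵀ * U t = 1)
    (hV : ∀ t ∈ Set.Icc t₀ t₁, (V t)ᵀ * V t = 1)
    (hS : ∀ t ∈ Set.Icc t₀ t₁, Invertible (S t))
    (hrank : ∀ t ∈ Set.Icc t₀ t₁, (A t).rank = r)
    (hUinv : Invertible ((U t₁)ᵀ * U t₀))
    (hVinv : Invertible ((V t₁)ᵀ * V t₀))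
    -- initial value Y₀ = A(t₀) = U₀ S₀ V₀ᵀ
    (Y₀ : Matrix (Fin m) (Fin n) ℝ) (hY₀ : Y₀ = A t₀)
    -- QR factorization of K(t₁) = A(t₁) V₀
    (U₁ : Matrix (Fin m) (Fin r) ℝ) (R₁ : Matrix (Fin r) (Fin r) ℝ)
    (hQR_K : A t₁ * V t₀ = U₁ * R₁) (hU₁ : U₁ᵀ * U₁ = 1)
    -- QR factorization of L(t₁) = A(t₁)ᵀ U₀
    (V₁ : Matrix (Fin n) (Fin r) ℝ) (R₁' : Matrix (Fin r) (Fin r) ℝ)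
    (hQR_L : (A t₁)ᵀ * U t₀ = V₁ * R₁') (hV₁ : V₁ᵀ * V₁ = 1)
    -- S-step result
    (S₁ : Matrix (Fin r) (Fin r) ℝ) (hS₁ : S₁ = U₁ᵀ * A t₁ * V₁) :
    U₁ * S₁ * V₁ᵀ = A t₁ :=
  stmt3_general t₀ t₁ ht A U S V hfac hU hV hS hUinv hVinv U₁ R₁ hQR_K hU₁ V₁ R₁' hQR_L hV₁ S₁ hS₁
end

section
/- Assume F : [0,T] × ℝ^{m×n} → ℝ^{m×n} is Lipschitz with constant L and bounded by B in Frobenius norm, the non-tangential part satisfies ‖(I − P(Y))F(t,Y)‖_F ≤ ε for rank-r matrices Y near the exact solution A(t) of A' = F(t,A), and A(t₀) = Y₀ with Y₀ of rank r. Then one step of the new low-rank integrator (K-step, L-step in parallel, followed by the Galerkin S-step with initial value MS₀Nᵀ) produces Y₁ of rank r satisfying the local error bound ‖Y₁ − A(t₀+h)‖_F ≤ h(ĉ₁ ε + ĉ₂ h), where ĉ₁, ĉ₂ depend only on L, B, and a bound on h, and are independent of the singular values of A or Y. -/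
attribute [local instance] Matrix.frobeniusNormedAddCommGroup Matrix.frobeniusNormedSpace

open Matrix

/-- The orthogonal projection onto the tangent space at `Y = U S Vᵀ` of the manifold of
rank-`r` matrices: `P(Y) Z = U Uᵀ Z + Z V Vᵀ − U Uᵀ Z V Vᵀ`. -/
def tangentProj {m n r : ℕ} (U : Matrix (Fin m) (Fin r) ℝ) (V : Matrix (Fin n) (Fin r) ℝ)
    (Z : Matrix (Fin m) (Fin n) ℝ) : Matrix (Fin m) (Fin n) ℝ :=
  U * Uᵀ * Z + Z * (V * Vᵀ) - U * Uᵀ * Z * (V * Vᵀ)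

/-!
The K-step makes `K(t₁) V₀ᵀ` an `O(L B h²)`-accurate approximation of `A(t₁) V₀ V₀ᵀ`: both
solve ODEs whose right-hand sides differ by `(F(A) − F(K V₀ᵀ)) V₀ V₀ᵀ = O(L B h)`. Since
`K(t₁) = U₁ R₁` lies in the range of `U₁`, the defect `(I − U₁U₁ᵀ) A(t₁)` is, up to that error,
the normal component `(I − U₁U₁ᵀ) A(t₁) (I − V₀V₀ᵀ)`. This vanishes at `t₀` and grows at rate at
most `ε + O(L B h)`, by the `ε`-condition at the rank-`r` point `U₁U₁ᵀ A(t₀)`, which is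
`O(B h)`-close to `A(t)`. The L-step is the K-step of the transposed problem and bounds
`A(t₁) (I − V₁V₁ᵀ)` in the same way. Finally, the S-step starts from `U₁U₁ᵀ A(t₀) V₁V₁ᵀ`, and its
distance to `U₁U₁ᵀ A(t) V₁V₁ᵀ` grows at rate `O(L B h)`.

Multiplying by a matrix with orthonormal columns, or by an orthogonal projection, does not increase
the Frobenius norm. Hence no constant depends on the singular values or the dimensions. The
`ε`-condition is needed at possibly rank-deficient points such as `U₁U₁ᵀ A(t₀)`. It extends there
from the full-rank case by continuity of `F`, since invertible matrices are dense.
-/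

open Set Filter Topology

namespace Matrix

variable {l m n k : Type*} [Fintype l] [Fintype m] [Fintype n] [Fintype k] [DecidableEq k]

theorem frobenius_norm_sq_eq_trace (X : Matrix m n ℝ) : ‖X‖ ^ 2 = (Xᵀ * X).trace := by
  rw [frobenius_norm_def, ← Real.rpow_natCast, ← Real.rpow_mul (by positivity)]
  norm_num [trace, mul_apply, Finset.sum_comm (γ := n), sq]

theorem norm_mul_of_orthonormal {U : Matrix m k ℝ} (hU : Uᵀ * U = 1) (X : Matrix k n ℝ) :
    ‖U * X‖ = ‖X‖ := by
  refine (pow_left_inj₀ (norm_nonneg _) (norm_nonneg _) two_ne_zero).1 ?_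
  rw [frobenius_norm_sq_eq_trace, frobenius_norm_sq_eq_trace, transpose_mul, Matrix.mul_assoc,
    ← Matrix.mul_assoc Uᵀ, hU, Matrix.one_mul]

theorem norm_sq_eq_norm_proj_sq_add {U : Matrix m k ℝ} (hU : Uᵀ * U = 1) (X : Matrix m n ℝ) :
    ‖X‖ ^ 2 = ‖U * Uᵀ * X‖ ^ 2 + ‖X - U * Uᵀ * X‖ ^ 2 := by
  set P := U * Uᵀ * X
  set R := X - P
  have hPR : Pᵀ * R = 0 := by
    simp only [P, R, transpose_mul, transpose_transpose, Matrix.mul_sub, Matrix.mul_assoc]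
    rw [← Matrix.mul_assoc Uᵀ U, hU, Matrix.one_mul, sub_self]
  have hRP : Rᵀ * P = 0 := by simpa [transpose_mul] using congrArg transpose hPR
  have hX : X = P + R := (add_sub_cancel P X).symm
  rw [frobenius_norm_sq_eq_trace, frobenius_norm_sq_eq_trace, frobenius_norm_sq_eq_trace, hX]
  simp only [transpose_add, Matrix.add_mul, Matrix.mul_add, trace_add, hPR, hRP, trace_zero]
  ring

theorem proj_mul_eq_self_of_eq_mul {ι : Type*} {U : Matrix m k ℝ} (hU : Uᵀ * U = 1)
    {X : Matrix m ι ℝ} {R : Matrix k ι ℝ} (hX : X = U * R) : U * Uᵀ * X = X := by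
  rw [hX, Matrix.mul_assoc, ← Matrix.mul_assoc Uᵀ, hU, Matrix.one_mul]

theorem norm_proj_mul_le {U : Matrix m k ℝ} (hU : Uᵀ * U = 1) (X : Matrix m n ℝ) :
    ‖U * Uᵀ * X‖ ≤ ‖X‖ := by
  have := norm_sq_eq_norm_proj_sq_add hU X
  exact (pow_le_pow_iff_left₀ (norm_nonneg _) (norm_nonneg _) two_ne_zero).1 (by nlinarith)

theorem norm_sub_proj_mul_le {U : Matrix m k ℝ} (hU : Uᵀ * U = 1) (X : Matrix m n ℝ) :
    ‖X - U * Uᵀ * X‖ ≤ ‖X‖ := by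
  have := norm_sq_eq_norm_proj_sq_add hU X
  exact (pow_le_pow_iff_left₀ (norm_nonneg _) (norm_nonneg _) two_ne_zero).1 (by nlinarith)

theorem norm_transpose_mul_le {U : Matrix m k ℝ} (hU : Uᵀ * U = 1) (X : Matrix m n ℝ) :
    ‖Uᵀ * X‖ ≤ ‖X‖ := by
  rw [← norm_mul_of_orthonormal hU, ← Matrix.mul_assoc]
  exact norm_proj_mul_le hU X

theorem norm_mul_transpose_of_orthonormal {V : Matrix n k ℝ} (hV : Vᵀ * V = 1)
    (X : Matrix m k ℝ) : ‖X * Vᵀ‖ = ‖X‖ := by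
  rw [← frobenius_norm_transpose, transpose_mul, transpose_transpose,
    norm_mul_of_orthonormal hV, frobenius_norm_transpose]

theorem norm_mul_le_of_orthonormal {V : Matrix n k ℝ} (hV : Vᵀ * V = 1) (X : Matrix m n ℝ) :
    ‖X * V‖ ≤ ‖X‖ := by
  rw [← frobenius_norm_transpose, transpose_mul, ← frobenius_norm_transpose X]
  exact norm_transpose_mul_le hV Xᵀ

theorem norm_mul_proj_le {V : Matrix n k ℝ} (hV : Vᵀ * V = 1) (X : Matrix m n ℝ) :
    ‖X * (V * Vᵀ)‖ ≤ ‖X‖ := by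
  rw [← frobenius_norm_transpose, transpose_mul, transpose_mul, transpose_transpose,
    ← frobenius_norm_transpose X]
  exact norm_proj_mul_le hV Xᵀ

theorem norm_sub_mul_proj_le {V : Matrix n k ℝ} (hV : Vᵀ * V = 1) (X : Matrix m n ℝ) :
    ‖X - X * (V * Vᵀ)‖ ≤ ‖X‖ := by
  rw [← frobenius_norm_transpose, transpose_sub, transpose_mul, transpose_mul,
    transpose_transpose, ← frobenius_norm_transpose X]
  exact norm_sub_proj_mul_le hV Xᵀ

theorem norm_sub_proj_mul_proj_le {U : Matrix m k ℝ} {V : Matrix n l ℝ}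
    (hU : Uᵀ * U = 1) (X : Matrix m n ℝ) :
    ‖X - U * Uᵀ * X * (V * Vᵀ)‖ ≤ ‖X - U * Uᵀ * X‖ + ‖X - X * (V * Vᵀ)‖ := by
  have hsplit : X - U * Uᵀ * X * (V * Vᵀ) = (X - U * Uᵀ * X) + U * Uᵀ * (X - X * (V * Vᵀ)) := by
    rw [Matrix.mul_sub, Matrix.mul_assoc (U * Uᵀ) X]; abel
  rw [hsplit]
  exact (norm_add_le _ _).trans (add_le_add le_rfl (norm_proj_mul_le hU _))

theorem eventually_isUnit_det_add_smul_one (S : Matrix k k ℝ) :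
    ∀ᶠ μ in 𝓝[≠] (0 : ℝ), IsUnit (S + μ • (1 : Matrix k k ℝ)).det := by
  have hroots : {μ : ℝ | (-S).charpoly.IsRoot μ}.Finite :=
    Polynomial.finite_setOfPred_isRoot (charpoly_monic _).ne_zero
  filter_upwards [nhdsNE_le_cofinite 0 hroots.compl_mem_cofinite] with μ hμ
  rw [isUnit_iff_ne_zero]
  -- `det (S + μ • 1)` is the characteristic polynomial of `-S` evaluated at `μ`
  intro h0
  apply hμ
  simp only [mem_ofPred_eq, Polynomial.IsRoot, eval_charpoly]
  convert h0 using 2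
  ext i j
  simp [scalar_apply, diagonal_apply, one_apply, add_comm]

theorem le_of_forall_isUnit_det_le {φ : Matrix k k ℝ → ℝ} (hφ : Continuous φ) {ε : ℝ}
    (h : ∀ S, IsUnit S.det → φ S ≤ ε) (S : Matrix k k ℝ) : φ S ≤ ε := by
  have hlim : Tendsto (fun μ : ℝ => φ (S + μ • (1 : Matrix k k ℝ))) (𝓝[≠] 0) (𝓝 (φ S)) := by
    have : Continuous fun μ : ℝ => φ (S + μ • (1 : Matrix k k ℝ)) := by fun_prop
    simpa using (this.tendsto 0).mono_left nhdsWithin_le_nhds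
  exact le_of_tendsto hlim ((eventually_isUnit_det_add_smul_one S).mono fun μ hμ => h _ hμ)

end Matrix

section Calculus

variable {l m n : Type*} [Fintype l] [Fintype m] [Fintype n] {f : ℝ → Matrix m n ℝ}
  {f' : Matrix m n ℝ} {x : ℝ}

theorem HasDerivAt.const_matrix_mul (M : Matrix l m ℝ) (hf : HasDerivAt f f' x) :
    HasDerivAt (fun t => M * f t) (M * f') x :=
  (mulLeftLinearMap n ℝ M).toContinuousLinearMap.hasFDerivAt.comp_hasDerivAt x hf

theorem HasDerivAt.matrix_mul_const_s10 (M : Matrix n l ℝ) (hf : HasDerivAt f f' x) :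
    HasDerivAt (fun t => f t * M) (f' * M) x :=
  (mulRightLinearMap m ℝ M).toContinuousLinearMap.hasFDerivAt.comp_hasDerivAt x hf

theorem HasDerivAt.matrix_transpose (hf : HasDerivAt f f' x) :
    HasDerivAt (fun t => (f t)ᵀ) f'ᵀ x :=
  (transposeLinearEquiv m n ℝ ℝ).toLinearMap.toContinuousLinearMap.hasFDerivAt.comp_hasDerivAt
    x hf

theorem norm_sub_le_of_norm_deriv_le {E : Type*} [NormedAddCommGroup E] [NormedSpace ℝ E]
    {g g' : ℝ → E} {a h C : ℝ} (hg : ∀ t ∈ Icc a (a + h), HasDerivAt g (g' t) t)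
    (hC : ∀ t ∈ Icc a (a + h), ‖g' t‖ ≤ C) : ∀ t ∈ Icc a (a + h), ‖g t - g a‖ ≤ h * C := by
  intro t ht
  have hC0 : 0 ≤ C := (norm_nonneg _).trans (hC t ht)
  calc ‖g t - g a‖ ≤ C * (t - a) :=
        norm_image_sub_le_of_norm_deriv_le_segment' (fun s hs => (hg s hs).hasDerivWithinAt)
          (fun s hs => hC s (Ico_subset_Icc_self hs)) t ht
    _ ≤ h * C := by nlinarith [ht.2]

theorem norm_le_of_norm_deriv_le_of_eq_zero {E : Type*} [NormedAddCommGroup E]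
    [NormedSpace ℝ E] {g g' : ℝ → E} {a h C : ℝ} (hh : 0 ≤ h)
    (hg : ∀ t ∈ Icc a (a + h), HasDerivAt g (g' t) t) (hC : ∀ t ∈ Icc a (a + h), ‖g' t‖ ≤ C)
    (hg₀ : g a = 0) : ‖g (a + h)‖ ≤ h * C := by
  simpa [hg₀] using norm_sub_le_of_norm_deriv_le hg hC (a + h) ⟨by linarith, le_rfl⟩

end Calculus

section TangentProj

variable {m n r : ℕ} (U : Matrix (Fin m) (Fin r) ℝ) (V : Matrix (Fin n) (Fin r) ℝ)

theorem sub_tangentProj_eq (Z : Matrix (Fin m) (Fin n) ℝ) :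
    Z - tangentProj U V Z = (Z - U * Uᵀ * Z) - (Z - U * Uᵀ * Z) * (V * Vᵀ) := by
  unfold tangentProj
  rw [Matrix.sub_mul]
  abel

theorem tangentProj_sub (Z Z' : Matrix (Fin m) (Fin n) ℝ) :
    tangentProj U V (Z - Z') = tangentProj U V Z - tangentProj U V Z' := by
  unfold tangentProj
  simp only [Matrix.mul_sub, Matrix.sub_mul]
  abel

theorem transpose_tangentProj (Z : Matrix (Fin m) (Fin n) ℝ) :
    (tangentProj U V Z)ᵀ = tangentProj V U Zᵀ := by
  simp only [tangentProj, transpose_sub, transpose_add, transpose_mul, transpose_transpose,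
    Matrix.mul_assoc]
  abel

variable {U V}

theorem norm_sub_tangentProj_le (hU : Uᵀ * U = 1) (hV : Vᵀ * V = 1)
    (Z : Matrix (Fin m) (Fin n) ℝ) : ‖Z - tangentProj U V Z‖ ≤ ‖Z‖ := by
  rw [sub_tangentProj_eq]
  exact (norm_sub_mul_proj_le hV _).trans (norm_sub_proj_mul_le hU _)

theorem sub_tangentProj_mul_transpose (hV : Vᵀ * V = 1) (X : Matrix (Fin m) (Fin r) ℝ) :
    X * Vᵀ - tangentProj U V (X * Vᵀ) = 0 := by
  have hX : X * Vᵀ * (V * Vᵀ) = X * Vᵀ := by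
    rw [Matrix.mul_assoc, ← Matrix.mul_assoc Vᵀ, hV, Matrix.one_mul]
  rw [sub_tangentProj_eq, Matrix.sub_mul, hX, Matrix.mul_assoc _ (X * Vᵀ), hX, sub_self]

theorem norm_sub_tangentProj_le_of_invertible
    {G : Matrix (Fin m) (Fin n) ℝ → Matrix (Fin m) (Fin n) ℝ} (hG : Continuous G) {ε : ℝ}
    (h : ∀ (U : Matrix (Fin m) (Fin r) ℝ) (Sm : Matrix (Fin r) (Fin r) ℝ)
      (V : Matrix (Fin n) (Fin r) ℝ), Uᵀ * U = 1 → Vᵀ * V = 1 → Invertible Sm →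
      ‖G (U * Sm * Vᵀ) - tangentProj U V (G (U * Sm * Vᵀ))‖ ≤ ε)
    (hU : Uᵀ * U = 1) (hV : Vᵀ * V = 1) (Sm : Matrix (Fin r) (Fin r) ℝ) :
    ‖G (U * Sm * Vᵀ) - tangentProj U V (G (U * Sm * Vᵀ))‖ ≤ ε := by
  refine le_of_forall_isUnit_det_le
    (φ := fun Sm => ‖G (U * Sm * Vᵀ) - tangentProj U V (G (U * Sm * Vᵀ))‖) ?_
    (fun S hS => h U S V hU hV (invertibleOfIsUnitDet S hS)) Sm
  unfold tangentProj
  fun_prop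

theorem HasDerivAt.sub_tangentProj {f : ℝ → Matrix (Fin m) (Fin n) ℝ}
    {f' : Matrix (Fin m) (Fin n) ℝ} {x : ℝ} (U : Matrix (Fin m) (Fin r) ℝ)
    (V : Matrix (Fin n) (Fin r) ℝ) (hf : HasDerivAt f f' x) :
    HasDerivAt (fun t => f t - tangentProj U V (f t)) (f' - tangentProj U V f') x := by
  simp only [sub_tangentProj_eq]
  have hleft := hf.sub (hf.const_matrix_mul (U * Uᵀ))
  exact hleft.sub (hleft.matrix_mul_const_s10 (V * Vᵀ))

end TangentProj

def NormalPartLE {m n : ℕ} (F : ℝ → Matrix (Fin m) (Fin n) ℝ → Matrix (Fin m) (Fin n) ℝ)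
    (I : Set ℝ) (r : ℕ) (ε : ℝ) : Prop :=
  ∀ t ∈ I, ∀ (U : Matrix (Fin m) (Fin r) ℝ) (Sm : Matrix (Fin r) (Fin r) ℝ)
    (V : Matrix (Fin n) (Fin r) ℝ), Uᵀ * U = 1 → Vᵀ * V = 1 →
    ‖F t (U * Sm * Vᵀ) - tangentProj U V (F t (U * Sm * Vᵀ))‖ ≤ ε

structure BoundedLipschitzOn {m n : Type*} [Fintype m] [Fintype n]
    (F : ℝ → Matrix m n ℝ → Matrix m n ℝ) (I : Set ℝ) (L B : ℝ) : Prop where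
  lipschitz : ∀ t ∈ I, ∀ Y Y' : Matrix m n ℝ, ‖F t Y - F t Y'‖ ≤ L * ‖Y - Y'‖
  norm_le : ∀ t ∈ I, ∀ Y : Matrix m n ℝ, ‖F t Y‖ ≤ B

namespace BoundedLipschitzOn

variable {m n : Type*} [Fintype m] [Fintype n] {F : ℝ → Matrix m n ℝ → Matrix m n ℝ}
  {I : Set ℝ} {L B : ℝ}

theorem transpose (hF : BoundedLipschitzOn F I L B) :
    BoundedLipschitzOn (fun t Z => (F t Zᵀ)ᵀ) I L B where
  lipschitz t ht Y Y' := by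
    simpa only [← transpose_sub, frobenius_norm_transpose] using hF.lipschitz t ht Yᵀ Y'ᵀ
  norm_le t ht Y := by simpa only [frobenius_norm_transpose] using hF.norm_le t ht Yᵀ

theorem continuous (hF : BoundedLipschitzOn F I L B) (hL : 0 ≤ L) {t : ℝ} (ht : t ∈ I) :
    Continuous (F t) :=
  (LipschitzWith.of_dist_le_mul (K := ⟨L, hL⟩) fun Y Y' => by
    rw [dist_eq_norm, dist_eq_norm]
    exact hF.lipschitz t ht Y Y').continuous

end BoundedLipschitzOn

section OneStep

variable {m n r : ℕ} {F : ℝ → Matrix (Fin m) (Fin n) ℝ → Matrix (Fin m) (Fin n) ℝ}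
  {A : ℝ → Matrix (Fin m) (Fin n) ℝ} {t₀ h L B ε : ℝ}

theorem norm_sub_tangentProj_solution_le (hF : BoundedLipschitzOn F (Icc t₀ (t₀ + h)) L B)
    (hL : 0 ≤ L) (hh : 0 ≤ h)
    (hε : NormalPartLE F (Icc t₀ (t₀ + h)) r ε)
    (hA : ∀ t ∈ Icc t₀ (t₀ + h), HasDerivAt A (F t (A t)) t)
    {U : Matrix (Fin m) (Fin r) ℝ} {V : Matrix (Fin n) (Fin r) ℝ} (hU : Uᵀ * U = 1)
    (hV : Vᵀ * V = 1) (Sm : Matrix (Fin r) (Fin r) ℝ) {δ : ℝ}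
    (hδ : ∀ t ∈ Icc t₀ (t₀ + h), ‖A t - U * Sm * Vᵀ‖ ≤ δ)
    (hA₀ : A t₀ - tangentProj U V (A t₀) = 0) :
    ‖A (t₀ + h) - tangentProj U V (A (t₀ + h))‖ ≤ h * (ε + L * δ) := by
  have hbound : ∀ t ∈ Icc t₀ (t₀ + h),
      ‖F t (A t) - tangentProj U V (F t (A t))‖ ≤ ε + L * δ := by
    intro t ht
    set Z := U * Sm * Vᵀ
    have hsplit : F t (A t) - tangentProj U V (F t (A t)) =
        (F t (A t) - F t Z - tangentProj U V (F t (A t) - F t Z))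
          + (F t Z - tangentProj U V (F t Z)) := by
      rw [tangentProj_sub]; abel
    calc ‖F t (A t) - tangentProj U V (F t (A t))‖
        ≤ ‖F t (A t) - F t Z‖ + ε := by
          rw [hsplit]
          exact (norm_add_le _ _).trans
            (add_le_add (norm_sub_tangentProj_le hU hV _) (hε t ht U Sm V hU hV))
      _ ≤ L * δ + ε := by
          gcongr
          exact (hF.lipschitz t ht _ _).trans (mul_le_mul_of_nonneg_left (hδ t ht) hL)
      _ = ε + L * δ := add_comm _ _
  exact norm_le_of_norm_deriv_le_of_eq_zero hh (fun t ht => (hA t ht).sub_tangentProj U V)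
    hbound hA₀

theorem kStep_norm_mul_proj_sub_le {K : ℝ → Matrix (Fin m) (Fin r) ℝ}
    {V : Matrix (Fin n) (Fin r) ℝ} (hF : BoundedLipschitzOn F (Icc t₀ (t₀ + h)) L B)
    (hL : 0 ≤ L) (hh : 0 ≤ h) (hA : ∀ t ∈ Icc t₀ (t₀ + h), HasDerivAt A (F t (A t)) t)
    (hV : Vᵀ * V = 1)
    (hK : ∀ t ∈ Icc t₀ (t₀ + h), HasDerivAt K (F t (K t * Vᵀ) * V) t)
    (hAK : A t₀ = K t₀ * Vᵀ) :
    ‖A (t₀ + h) * (V * Vᵀ) - K (t₀ + h) * Vᵀ‖ ≤ h * (2 * L * B * h) := by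
  have hAdrift := norm_sub_le_of_norm_deriv_le hA fun t ht => hF.norm_le t ht _
  have hKdrift := norm_sub_le_of_norm_deriv_le hK fun t ht =>
    (norm_mul_le_of_orthonormal hV _).trans (hF.norm_le t ht _)
  have hbound : ∀ t ∈ Icc t₀ (t₀ + h),
      ‖F t (A t) * (V * Vᵀ) - F t (K t * Vᵀ) * V * Vᵀ‖ ≤ 2 * L * B * h := by
    intro t ht
    have hdist : ‖A t - K t * Vᵀ‖ ≤ h * B + h * B := by
      have hK' : ‖K t₀ * Vᵀ - K t * Vᵀ‖ ≤ h * B := by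
        rw [← Matrix.sub_mul, norm_mul_transpose_of_orthonormal hV, norm_sub_rev]
        exact hKdrift t ht
      calc ‖A t - K t * Vᵀ‖ ≤ ‖A t - A t₀‖ + ‖K t₀ * Vᵀ - K t * Vᵀ‖ := by
            rw [hAK]; exact norm_sub_le_norm_sub_add_norm_sub _ _ _
        _ ≤ h * B + h * B := add_le_add (hAdrift t ht) hK'
    rw [Matrix.mul_assoc _ V, ← Matrix.sub_mul]
    calc ‖(F t (A t) - F t (K t * Vᵀ)) * (V * Vᵀ)‖ ≤ ‖F t (A t) - F t (K t * Vᵀ)‖ :=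
          norm_mul_proj_le hV _
      _ ≤ L * (h * B + h * B) :=
          (hF.lipschitz t ht _ _).trans (mul_le_mul_of_nonneg_left hdist hL)
      _ = 2 * L * B * h := by ring
  have hinit : A t₀ * (V * Vᵀ) - K t₀ * Vᵀ = 0 := by
    rw [hAK, Matrix.mul_assoc, ← Matrix.mul_assoc Vᵀ, hV, Matrix.one_mul, sub_self]
  exact norm_le_of_norm_deriv_le_of_eq_zero hh
    (fun t ht => ((hA t ht).matrix_mul_const_s10 (V * Vᵀ)).sub ((hK t ht).matrix_mul_const_s10 Vᵀ))
    hbound hinit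

theorem kStep_norm_sub_proj_initial_le (hF : BoundedLipschitzOn F (Icc t₀ (t₀ + h)) L B)
    (hh : 0 ≤ h) {V₀ : Matrix (Fin n) (Fin r) ℝ} {K : ℝ → Matrix (Fin m) (Fin r) ℝ}
    {U₁ : Matrix (Fin m) (Fin r) ℝ} {R₁ : Matrix (Fin r) (Fin r) ℝ} (hV₀ : V₀ᵀ * V₀ = 1)
    (hK : ∀ t ∈ Icc t₀ (t₀ + h), HasDerivAt K (F t (K t * V₀ᵀ) * V₀) t)
    (hAK : A t₀ = K t₀ * V₀ᵀ) (hK₁ : K (t₀ + h) = U₁ * R₁) (hU₁ : U₁ᵀ * U₁ = 1) :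
    ‖A t₀ - U₁ * U₁ᵀ * A t₀‖ ≤ h * B := by
  have hKdrift := norm_sub_le_of_norm_deriv_le hK fun t ht =>
    (norm_mul_le_of_orthonormal hV₀ _).trans (hF.norm_le t ht _)
  have hsplit : A t₀ - U₁ * U₁ᵀ * A t₀ = (K t₀ - K (t₀ + h)) * V₀ᵀ
      - U₁ * U₁ᵀ * ((K t₀ - K (t₀ + h)) * V₀ᵀ) := by
    rw [hAK, Matrix.sub_mul, Matrix.mul_sub, ← Matrix.mul_assoc _ (K (t₀ + h)),
      proj_mul_eq_self_of_eq_mul hU₁ hK₁]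
    abel
  rw [hsplit]
  refine (norm_sub_proj_mul_le hU₁ _).trans ?_
  rw [norm_mul_transpose_of_orthonormal hV₀, norm_sub_rev]
  exact hKdrift _ ⟨by linarith, le_rfl⟩

theorem kStep_norm_sub_proj_le (hF : BoundedLipschitzOn F (Icc t₀ (t₀ + h)) L B) (hL : 0 ≤ L)
    (hh : 0 ≤ h) (hε : NormalPartLE F (Icc t₀ (t₀ + h)) r ε)
    (hA : ∀ t ∈ Icc t₀ (t₀ + h), HasDerivAt A (F t (A t)) t)
    {V₀ : Matrix (Fin n) (Fin r) ℝ} {K : ℝ → Matrix (Fin m) (Fin r) ℝ}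
    {U₁ : Matrix (Fin m) (Fin r) ℝ} {R₁ : Matrix (Fin r) (Fin r) ℝ} (hV₀ : V₀ᵀ * V₀ = 1)
    (hK : ∀ t ∈ Icc t₀ (t₀ + h), HasDerivAt K (F t (K t * V₀ᵀ) * V₀) t)
    (hAK : A t₀ = K t₀ * V₀ᵀ) (hK₁ : K (t₀ + h) = U₁ * R₁) (hU₁ : U₁ᵀ * U₁ = 1) :
    ‖A t₀ - U₁ * U₁ᵀ * A t₀‖ ≤ h * B ∧
      ‖A (t₀ + h) - U₁ * U₁ᵀ * A (t₀ + h)‖ ≤ h * (ε + 4 * L * B * h) := by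
  have hinit := kStep_norm_sub_proj_initial_le hF hh hV₀ hK hAK hK₁ hU₁
  refine ⟨hinit, ?_⟩
  have hAdrift := norm_sub_le_of_norm_deriv_le hA fun t ht => hF.norm_le t ht _
  have hK₁U₁ : U₁ * U₁ᵀ * (K (t₀ + h) * V₀ᵀ) = K (t₀ + h) * V₀ᵀ := by
    rw [← Matrix.mul_assoc, proj_mul_eq_self_of_eq_mul hU₁ hK₁]
  set E := A (t₀ + h) * (V₀ * V₀ᵀ) - K (t₀ + h) * V₀ᵀ
  have hsplit : A (t₀ + h) - U₁ * U₁ᵀ * A (t₀ + h) =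
      (E - U₁ * U₁ᵀ * E) + (A (t₀ + h) - tangentProj U₁ V₀ (A (t₀ + h))) := by
    simp only [E]
    rw [Matrix.mul_sub (U₁ * U₁ᵀ), hK₁U₁]
    simp only [tangentProj, Matrix.mul_assoc]
    abel
  have hnormal := norm_sub_tangentProj_solution_le hF hL hh hε hA hU₁ hV₀ (U₁ᵀ * K t₀)
    (δ := h * B + h * B) (fun t ht => by
      have hP : U₁ * (U₁ᵀ * K t₀) * V₀ᵀ = U₁ * U₁ᵀ * A t₀ := by
        rw [hAK]; simp only [Matrix.mul_assoc]
      rw [hP]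
      exact (norm_sub_le_norm_sub_add_norm_sub _ (A t₀) _).trans
        (add_le_add (hAdrift t ht) hinit))
    (by rw [hAK]; exact sub_tangentProj_mul_transpose hV₀ _)
  rw [hsplit]
  calc ‖E - U₁ * U₁ᵀ * E + (A (t₀ + h) - tangentProj U₁ V₀ (A (t₀ + h)))‖
      ≤ h * (2 * L * B * h) + h * (ε + L * (h * B + h * B)) :=
        (norm_add_le _ _).trans (add_le_add ((norm_sub_proj_mul_le hU₁ E).trans
          (kStep_norm_mul_proj_sub_le hF hL hh hA hV₀ hK hAK)) hnormal)
    _ = h * (ε + 4 * L * B * h) := by ring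

theorem lStep_norm_sub_mul_proj_le (hF : BoundedLipschitzOn F (Icc t₀ (t₀ + h)) L B) (hL : 0 ≤ L)
    (hh : 0 ≤ h) (hε : NormalPartLE F (Icc t₀ (t₀ + h)) r ε)
    (hA : ∀ t ∈ Icc t₀ (t₀ + h), HasDerivAt A (F t (A t)) t)
    {U₀ : Matrix (Fin m) (Fin r) ℝ} {Lm : ℝ → Matrix (Fin n) (Fin r) ℝ}
    {V₁ : Matrix (Fin n) (Fin r) ℝ} {R₁ : Matrix (Fin r) (Fin r) ℝ} (hU₀ : U₀ᵀ * U₀ = 1)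
    (hLm : ∀ t ∈ Icc t₀ (t₀ + h), HasDerivAt Lm ((F t (U₀ * (Lm t)ᵀ))ᵀ * U₀) t)
    (hAL : A t₀ = U₀ * (Lm t₀)ᵀ) (hL₁ : Lm (t₀ + h) = V₁ * R₁) (hV₁ : V₁ᵀ * V₁ = 1) :
    ‖A t₀ - A t₀ * (V₁ * V₁ᵀ)‖ ≤ h * B ∧
      ‖A (t₀ + h) - A (t₀ + h) * (V₁ * V₁ᵀ)‖ ≤ h * (ε + 4 * L * B * h) := by
  have htr : ∀ X : Matrix (Fin m) (Fin n) ℝ,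
      ‖Xᵀ - V₁ * V₁ᵀ * Xᵀ‖ = ‖X - X * (V₁ * V₁ᵀ)‖ := fun X => by
    rw [← frobenius_norm_transpose (X - _)]
    simp only [transpose_sub, transpose_mul, transpose_transpose, Matrix.mul_assoc]
  simp only [← htr]
  refine kStep_norm_sub_proj_le (F := fun t Z => (F t Zᵀ)ᵀ) (A := fun t => (A t)ᵀ)
    hF.transpose hL hh (fun t ht U Sm V hU hV => ?_) (fun t ht => ?_) hU₀ (fun t ht => ?_) ?_
    hL₁ hV₁
  · rw [← frobenius_norm_transpose, transpose_sub, transpose_tangentProj]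
    simpa only [transpose_transpose, transpose_mul, Matrix.mul_assoc] using
      hε t ht V Smᵀ U hV hU
  · simpa only [transpose_transpose] using (hA t ht).matrix_transpose
  · simpa only [transpose_mul, transpose_transpose] using hLm t ht
  · simp only [hAL, transpose_mul, transpose_transpose]

theorem sStep_norm_sub_solution_le (hF : BoundedLipschitzOn F (Icc t₀ (t₀ + h)) L B)
    (hA : ∀ t ∈ Icc t₀ (t₀ + h), HasDerivAt A (F t (A t)) t)
    {U : Matrix (Fin m) (Fin r) ℝ} {V : Matrix (Fin n) (Fin r) ℝ}
    {S : ℝ → Matrix (Fin r) (Fin r) ℝ} (hU : Uᵀ * U = 1) (hV : Vᵀ * V = 1)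
    (hS : ∀ t ∈ Icc t₀ (t₀ + h), HasDerivAt S (Uᵀ * F t (U * S t * Vᵀ) * V) t)
    (hS₀ : S t₀ = Uᵀ * A t₀ * V) :
    ∀ t ∈ Icc t₀ (t₀ + h),
      ‖U * S t * Vᵀ - A t‖ ≤ 2 * (h * B) + ‖A t₀ - U * Uᵀ * A t₀ * (V * Vᵀ)‖ := by
  have hAdrift := norm_sub_le_of_norm_deriv_le hA fun t ht => hF.norm_le t ht _
  have hSdrift := norm_sub_le_of_norm_deriv_le hS fun t ht =>
    ((norm_mul_le_of_orthonormal hV _).trans (norm_transpose_mul_le hU _)).trans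
      (hF.norm_le t ht _)
  have hY₀ : U * S t₀ * Vᵀ = U * Uᵀ * A t₀ * (V * Vᵀ) := by
    rw [hS₀]; simp only [Matrix.mul_assoc]
  intro t ht
  have hY : ‖U * S t * Vᵀ - U * S t₀ * Vᵀ‖ ≤ h * B := by
    rw [← Matrix.sub_mul, ← Matrix.mul_sub, norm_mul_transpose_of_orthonormal hV,
      norm_mul_of_orthonormal hU]
    exact hSdrift t ht
  calc ‖U * S t * Vᵀ - A t‖
      ≤ ‖U * S t * Vᵀ - U * S t₀ * Vᵀ‖ + (‖U * S t₀ * Vᵀ - A t₀‖ + ‖A t₀ - A t‖) :=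
        (norm_sub_le_norm_sub_add_norm_sub _ _ _).trans
          (add_le_add le_rfl (norm_sub_le_norm_sub_add_norm_sub _ _ _))
    _ ≤ h * B + (‖A t₀ - U * Uᵀ * A t₀ * (V * Vᵀ)‖ + h * B) := by
        rw [← hY₀, norm_sub_rev (U * S t₀ * Vᵀ), norm_sub_rev (A t₀) (A t)]
        exact add_le_add hY (add_le_add le_rfl (hAdrift t ht))
    _ = 2 * (h * B) + ‖A t₀ - U * Uᵀ * A t₀ * (V * Vᵀ)‖ := by ring

theorem sStep_norm_sub_proj_le (hF : BoundedLipschitzOn F (Icc t₀ (t₀ + h)) L B) (hL : 0 ≤ L)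
    (hh : 0 ≤ h) (hA : ∀ t ∈ Icc t₀ (t₀ + h), HasDerivAt A (F t (A t)) t)
    {U : Matrix (Fin m) (Fin r) ℝ} {V : Matrix (Fin n) (Fin r) ℝ}
    {S : ℝ → Matrix (Fin r) (Fin r) ℝ} (hU : Uᵀ * U = 1) (hV : Vᵀ * V = 1)
    (hS : ∀ t ∈ Icc t₀ (t₀ + h), HasDerivAt S (Uᵀ * F t (U * S t * Vᵀ) * V) t)
    (hS₀ : S t₀ = Uᵀ * A t₀ * V) :
    ‖U * S (t₀ + h) * Vᵀ - U * Uᵀ * A (t₀ + h) * (V * Vᵀ)‖ ≤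
      h * (L * (2 * (h * B) + ‖A t₀ - U * Uᵀ * A t₀ * (V * Vᵀ)‖)) := by
  have hdist := sStep_norm_sub_solution_le hF hA hU hV hS hS₀
  have hbound : ∀ t ∈ Icc t₀ (t₀ + h),
      ‖U * (Uᵀ * F t (U * S t * Vᵀ) * V) * Vᵀ - U * Uᵀ * F t (A t) * (V * Vᵀ)‖ ≤
        L * (2 * (h * B) + ‖A t₀ - U * Uᵀ * A t₀ * (V * Vᵀ)‖) := by
    intro t ht
    have heq : U * (Uᵀ * F t (U * S t * Vᵀ) * V) * Vᵀ - U * Uᵀ * F t (A t) * (V * Vᵀ) =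
        U * Uᵀ * (F t (U * S t * Vᵀ) - F t (A t)) * (V * Vᵀ) := by
      simp only [Matrix.mul_sub, Matrix.sub_mul, Matrix.mul_assoc]
    rw [heq]
    exact ((norm_mul_proj_le hV _).trans (norm_proj_mul_le hU _)).trans
      ((hF.lipschitz t ht _ _).trans (mul_le_mul_of_nonneg_left (hdist t ht) hL))
  have hY₀ : U * S t₀ * Vᵀ - U * Uᵀ * A t₀ * (V * Vᵀ) = 0 := by
    rw [hS₀, sub_eq_zero]; simp only [Matrix.mul_assoc]
  exact norm_le_of_norm_deriv_le_of_eq_zero hh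
    (fun t ht => (((hS t ht).const_matrix_mul U).matrix_mul_const_s10 Vᵀ).sub
      (((hA t ht).const_matrix_mul (U * Uᵀ)).matrix_mul_const_s10 (V * Vᵀ)))
    hbound hY₀

end OneStep

theorem stmt10_general {m n r : ℕ} (T L B hmax : ℝ) (hL : 0 ≤ L) :
    ∃ c₁ c₂ : ℝ, ∀ (ε t₀ h : ℝ), 0 < h → h ≤ hmax → 0 ≤ t₀ → t₀ + h ≤ T →
      ∀ (F : ℝ → Matrix (Fin m) (Fin n) ℝ → Matrix (Fin m) (Fin n) ℝ)
        (A : ℝ → Matrix (Fin m) (Fin n) ℝ)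
        (U₀ : Matrix (Fin m) (Fin r) ℝ) (S₀ : Matrix (Fin r) (Fin r) ℝ)
        (V₀ : Matrix (Fin n) (Fin r) ℝ)
        (K Lmat : ℝ → _) (U₁ : Matrix (Fin m) (Fin r) ℝ) (R₁ : Matrix (Fin r) (Fin r) ℝ)
        (V₁ : Matrix (Fin n) (Fin r) ℝ) (R₁' : Matrix (Fin r) (Fin r) ℝ)
        (S : ℝ → Matrix (Fin r) (Fin r) ℝ) (Y₁ : Matrix (Fin m) (Fin n) ℝ),
      -- F is Lipschitz and bounded in the Frobenius norm
      (∀ t ∈ Set.Icc (0:ℝ) T, ∀ Y Y' : Matrix (Fin m) (Fin n) ℝ,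
        ‖F t Y - F t Y'‖ ≤ L * ‖Y - Y'‖) →
      (∀ t ∈ Set.Icc (0:ℝ) T, ∀ Y : Matrix (Fin m) (Fin n) ℝ, ‖F t Y‖ ≤ B) →
      -- the non-tangential part of F is ε-small on the rank-r manifold
      (∀ t ∈ Set.Icc (0:ℝ) T, ∀ (U : Matrix (Fin m) (Fin r) ℝ)
        (Sm : Matrix (Fin r) (Fin r) ℝ) (V : Matrix (Fin n) (Fin r) ℝ),
        Uᵀ * U = 1 → Vᵀ * V = 1 → Invertible Sm →
        ‖F t (U * Sm * Vᵀ) - tangentProj U V (F t (U * Sm * Vᵀ))‖ ≤ ε) →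
      -- A solves the full problem with rank-r initial value Y₀ = U₀ S₀ V₀ᵀ = A(t₀)
      (∀ t ∈ Set.Icc t₀ (t₀ + h), HasDerivAt A (F t (A t)) t) →
      U₀ᵀ * U₀ = 1 → V₀ᵀ * V₀ = 1 → Invertible S₀ →
      A t₀ = U₀ * S₀ * V₀ᵀ →
      -- K-step: K' = F(t, K V₀ᵀ) V₀, K(t₀) = U₀ S₀, QR: K(t₁) = U₁ R₁
      K t₀ = U₀ * S₀ →
      (∀ t ∈ Set.Icc t₀ (t₀ + h), HasDerivAt K (F t (K t * V₀ᵀ) * V₀) t) →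
      K (t₀ + h) = U₁ * R₁ → U₁ᵀ * U₁ = 1 →
      -- L-step: L' = F(t, U₀ Lᵀ)ᵀ U₀, L(t₀) = V₀ S₀ᵀ, QR: L(t₁) = V₁ R̃₁
      Lmat t₀ = V₀ * S₀ᵀ →
      (∀ t ∈ Set.Icc t₀ (t₀ + h), HasDerivAt Lmat ((F t (U₀ * (Lmat t)ᵀ))ᵀ * U₀) t) →
      Lmat (t₀ + h) = V₁ * R₁' → V₁ᵀ * V₁ = 1 →
      -- S-step: S' = U₁ᵀ F(t, U₁ S V₁ᵀ) V₁, S(t₀) = M S₀ Nᵀ with M = U₁ᵀU₀, N = V₁ᵀV₀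
      S t₀ = (U₁ᵀ * U₀) * S₀ * (V₁ᵀ * V₀)ᵀ →
      (∀ t ∈ Set.Icc t₀ (t₀ + h), HasDerivAt S (U₁ᵀ * F t (U₁ * S t * V₁ᵀ) * V₁) t) →
      -- result of one step
      Y₁ = U₁ * S (t₀ + h) * V₁ᵀ →
      ‖Y₁ - A (t₀ + h)‖ ≤ h * (c₁ * ε + c₂ * h) := by
  refine ⟨2, 12 * L * B, fun ε t₀ h hh _ ht₀ htT F A U₀ S₀ V₀ K Lmat U₁ R₁ V₁ R₁' S Y₁
    hFlip hFbd hFε hA hU₀ hV₀ _ hA₀ hK₀ hK hK₁ hU₁ hL₀ hLm hL₁ hV₁ hS₀ hS hY₁ => ?_⟩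
  have hI : Icc t₀ (t₀ + h) ⊆ Icc 0 T := Icc_subset_Icc ht₀ htT
  have hF : BoundedLipschitzOn F (Icc t₀ (t₀ + h)) L B :=
    ⟨fun t ht => hFlip t (hI ht), fun t ht => hFbd t (hI ht)⟩
  have hε : NormalPartLE F (Icc t₀ (t₀ + h)) r ε := fun t ht U Sm V hU hV =>
    norm_sub_tangentProj_le_of_invertible (hF.continuous hL ht) (hFε t (hI ht)) hU hV Sm
  obtain ⟨hU₁A₀, hU₁A₁⟩ :=
    kStep_norm_sub_proj_le hF hL hh.le hε hA hV₀ hK (by rw [hA₀, hK₀]) hK₁ hU₁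
  obtain ⟨hV₁A₀, hV₁A₁⟩ := lStep_norm_sub_mul_proj_le hF hL hh.le hε hA hU₀ hLm
    (by rw [hA₀, hL₀, transpose_mul, transpose_transpose, Matrix.mul_assoc]) hL₁ hV₁
  have hsStep := sStep_norm_sub_proj_le hF hL hh.le hA hU₁ hV₁ hS
    (by rw [hS₀, hA₀]; simp only [transpose_mul, transpose_transpose, Matrix.mul_assoc])
  have hY₁proj : ‖Y₁ - U₁ * U₁ᵀ * A (t₀ + h) * (V₁ * V₁ᵀ)‖ ≤ h * (L * (4 * (h * B))) := by
    rw [hY₁]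
    refine hsStep.trans ?_
    have hproj₀ := norm_sub_proj_mul_proj_le hU₁ (V := V₁) (A t₀)
    gcongr
    linarith
  have hproj₁ := norm_sub_proj_mul_proj_le hU₁ (V := V₁) (A (t₀ + h))
  calc ‖Y₁ - A (t₀ + h)‖
      ≤ ‖Y₁ - U₁ * U₁ᵀ * A (t₀ + h) * (V₁ * V₁ᵀ)‖
        + ‖A (t₀ + h) - U₁ * U₁ᵀ * A (t₀ + h) * (V₁ * V₁ᵀ)‖ := by
        rw [norm_sub_rev (A (t₀ + h))]; exact norm_sub_le_norm_sub_add_norm_sub _ _ _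
    _ ≤ h * (L * (4 * (h * B))) + 2 * (h * (ε + 4 * L * B * h)) := by linarith
    _ = h * (2 * ε + 12 * L * B * h) := by ring

/-- local error bound `‖Y₁ − A(t₀+h)‖ ≤ h (ĉ₁ ε + ĉ₂ h)` for one step of the
new low-rank integrator (K-step and L-step in parallel, followed by the Galerkin S-step with
initial value `M S₀ Nᵀ`), with constants depending only on `L`, `B` and a bound `h_max` on
the step size, independent of singular values. -/
theorem stmt10 {m n r : ℕ} (T L B hmax : ℝ) (hL : 0 ≤ L) (hB : 0 ≤ B) (hmax_pos : 0 < hmax) :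
    ∃ c₁ c₂ : ℝ, ∀ (ε t₀ h : ℝ), 0 < h → h ≤ hmax → 0 ≤ t₀ → t₀ + h ≤ T →
      ∀ (F : ℝ → Matrix (Fin m) (Fin n) ℝ → Matrix (Fin m) (Fin n) ℝ)
        (A : ℝ → Matrix (Fin m) (Fin n) ℝ)
        (U₀ : Matrix (Fin m) (Fin r) ℝ) (S₀ : Matrix (Fin r) (Fin r) ℝ)
        (V₀ : Matrix (Fin n) (Fin r) ℝ)
        (K Lmat : ℝ → _) (U₁ : Matrix (Fin m) (Fin r) ℝ) (R₁ : Matrix (Fin r) (Fin r) ℝ)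
        (V₁ : Matrix (Fin n) (Fin r) ℝ) (R₁' : Matrix (Fin r) (Fin r) ℝ)
        (S : ℝ → Matrix (Fin r) (Fin r) ℝ) (Y₁ : Matrix (Fin m) (Fin n) ℝ),
      -- F is Lipschitz and bounded in the Frobenius norm
      (∀ t ∈ Set.Icc (0:ℝ) T, ∀ Y Y' : Matrix (Fin m) (Fin n) ℝ,
        ‖F t Y - F t Y'‖ ≤ L * ‖Y - Y'‖) →
      (∀ t ∈ Set.Icc (0:ℝ) T, ∀ Y : Matrix (Fin m) (Fin n) ℝ, ‖F t Y‖ ≤ B) →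
      -- the non-tangential part of F is ε-small on the rank-r manifold
      (∀ t ∈ Set.Icc (0:ℝ) T, ∀ (U : Matrix (Fin m) (Fin r) ℝ)
        (Sm : Matrix (Fin r) (Fin r) ℝ) (V : Matrix (Fin n) (Fin r) ℝ),
        Uᵀ * U = 1 → Vᵀ * V = 1 → Invertible Sm →
        ‖F t (U * Sm * Vᵀ) - tangentProj U V (F t (U * Sm * Vᵀ))‖ ≤ ε) →
      -- A solves the full problem with rank-r initial value Y₀ = U₀ S₀ V₀ᵀ = A(t₀)
      (∀ t ∈ Set.Icc t₀ (t₀ + h), HasDerivAt A (F t (A t)) t) →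
      U₀ᵀ * U₀ = 1 → V₀ᵀ * V₀ = 1 → Invertible S₀ →
      A t₀ = U₀ * S₀ * V₀ᵀ →
      -- K-step: K' = F(t, K V₀ᵀ) V₀, K(t₀) = U₀ S₀, QR: K(t₁) = U₁ R₁
      K t₀ = U₀ * S₀ →
      (∀ t ∈ Set.Icc t₀ (t₀ + h), HasDerivAt K (F t (K t * V₀ᵀ) * V₀) t) →
      K (t₀ + h) = U₁ * R₁ → U₁ᵀ * U₁ = 1 →
      -- L-step: L' = F(t, U₀ Lᵀ)ᵀ U₀, L(t₀) = V₀ S₀ᵀ, QR: L(t₁) = V₁ R̃₁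
      Lmat t₀ = V₀ * S₀ᵀ →
      (∀ t ∈ Set.Icc t₀ (t₀ + h), HasDerivAt Lmat ((F t (U₀ * (Lmat t)ᵀ))ᵀ * U₀) t) →
      Lmat (t₀ + h) = V₁ * R₁' → V₁ᵀ * V₁ = 1 →
      -- S-step: S' = U₁ᵀ F(t, U₁ S V₁ᵀ) V₁, S(t₀) = M S₀ Nᵀ with M = U₁ᵀU₀, N = V₁ᵀV₀
      S t₀ = (U₁ᵀ * U₀) * S₀ * (V₁ᵀ * V₀)ᵀ →
      (∀ t ∈ Set.Icc t₀ (t₀ + h), HasDerivAt S (U₁ᵀ * F t (U₁ * S t * V₁ᵀ) * V₁) t) →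
      -- result of one step
      Y₁ = U₁ * S (t₀ + h) * V₁ᵀ →
      ‖Y₁ - A (t₀ + h)‖ ≤ h * (c₁ * ε + c₂ * h) :=
  stmt10_general T L B hmax hL
end

section
/- Suppose F : [0,T] × ℝ^{n×n} → ℝ^{n×n} satisfies F(t, Yᵀ)ᵀ = −F(t, −Y) for all Y, and let S₀ ∈ ℝ^{r×r} be skew-symmetric, Y₀ = U₀S₀U₀ᵀ. Then in the new low-rank integrator the L-step solution satisfies L(t) = −K(t) for all t, hence one may take V₁ = U₁ and N = M, the S-step initial value MS₀Mᵀ is skew-symmetric, the right-hand side S ↦ U₁ᵀF(t, U₁SU₁ᵀ)U₁ maps skew-symmetric matrices to skew-symmetric matrices, and consequently Y₁ = U₁S₁U₁ᵀ is skew-symmetric. -/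
attribute [local instance] Matrix.frobeniusNormedAddCommGroup Matrix.frobeniusNormedSpace

open Matrix

/-!
Both claims about trajectories come from uniqueness of solutions of Lipschitz ODEs. The symmetry
`F(t, Yᵀ)ᵀ = -F(t, -Y)` says precisely that `-K` solves the L-step ODE and that `S ↦ -Sᵀ` maps
solutions of the S-step ODE to solutions; since the initial values match (`S₀` and hence
`M S₀ Mᵀ` are skew-symmetric), `L = -K` and `S(t) = -S(t)ᵀ`.
-/

open Set

theorem Set.EqOn.comp_of_hasDerivAt_of_intertwines {E E' : Type*}
    [NormedAddCommGroup E] [NormedSpace ℝ E] [NormedAddCommGroup E'] [NormedSpace ℝ E']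
    (φ : E' →L[ℝ] E) {v : ℝ → E → E} {w : ℝ → E' → E'} {C : NNReal}
    (hv : ∀ t, LipschitzWith C (v t)) (hvw : ∀ t x, v t (φ x) = φ (w t x))
    {f : ℝ → E} {g : ℝ → E'} {a b : ℝ}
    (hf : ∀ t ∈ Icc a b, HasDerivAt f (v t (f t)) t)
    (hg : ∀ t ∈ Icc a b, HasDerivAt g (w t (g t)) t)
    (ha : f a = φ (g a)) : EqOn f (φ ∘ g) (Icc a b) := by
  have hφg : ∀ t ∈ Icc a b, HasDerivAt (φ ∘ g) (v t ((φ ∘ g) t)) t := fun t ht => by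
    simpa only [Function.comp_apply, hvw] using φ.hasFDerivAt.comp_hasDerivAt t (hg t ht)
  exact ODE_solution_unique hv
    (fun t ht => (hf t ht).continuousAt.continuousWithinAt)
    (fun t ht => (hf t (Ico_subset_Icc_self ht)).hasDerivWithinAt)
    (fun t ht => (hφg t ht).continuousAt.continuousWithinAt)
    (fun t ht => (hφg t (Ico_subset_Icc_self ht)).hasDerivWithinAt)
    ha

namespace Matrix

variable {l m n : Type*} [Fintype l] [Fintype m] [Fintype n]

theorem lipschitzWith_mul_left (A : Matrix l m ℝ) :
    LipschitzWith ‖A‖₊ (fun X : Matrix m n ℝ => A * X) :=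
  LipschitzWith.of_dist_le_mul fun X Y => by
    simpa only [dist_eq_norm, Matrix.mul_sub, coe_nnnorm] using frobenius_norm_mul A (X - Y)

theorem lipschitzWith_mul_right (B : Matrix m n ℝ) :
    LipschitzWith ‖B‖₊ (fun X : Matrix l m ℝ => X * B) :=
  LipschitzWith.of_dist_le_mul fun X Y => by
    simpa only [dist_eq_norm, Matrix.sub_mul, coe_nnnorm, mul_comm ‖B‖] using
      frobenius_norm_mul (X - Y) B

theorem lipschitzWith_transpose : LipschitzWith 1 (transpose : Matrix m n ℝ → Matrix n m ℝ) :=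
  LipschitzWith.of_dist_le_mul fun X Y => by
    simp only [dist_eq_norm, ← transpose_sub, frobenius_norm_transpose, NNReal.coe_one, one_mul,
      le_refl]

theorem transpose_mul_mul_transpose_of_transpose_eq_neg {m n : Type*} [Fintype m]
    {S : Matrix m m ℝ} (hS : Sᵀ = -S) (A : Matrix n m ℝ) : (A * S * Aᵀ)ᵀ = -(A * S * Aᵀ) := by
  simp only [transpose_mul, transpose_transpose, hS, Matrix.mul_neg, Matrix.neg_mul,
    Matrix.mul_assoc]

end Matrix

section TransposeOdd

variable {n : Type*} {F : Matrix n n ℝ → Matrix n n ℝ} (hF : ∀ Y, (F Yᵀ)ᵀ = -F (-Y))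
include hF

theorem apply_neg_transpose (Y : Matrix n n ℝ) : F (-Yᵀ) = -(F Y)ᵀ := by
  rw [← neg_neg (F (-Yᵀ)), ← hF, transpose_transpose]

variable [Fintype n] {r : Type*} [Fintype r]

theorem transpose_apply_mul_transpose_neg (U : Matrix n r ℝ) (W : Matrix n r ℝ) :
    (F (U * (-W)ᵀ))ᵀ * U = -(F (W * Uᵀ) * U) := by
  have hprod : U * (-W)ᵀ = -(W * Uᵀ)ᵀ := by
    rw [transpose_mul, transpose_transpose, transpose_neg, Matrix.mul_neg]
  rw [hprod, apply_neg_transpose hF, transpose_neg, transpose_transpose, Matrix.neg_mul]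

theorem galerkin_apply_neg_transpose (U : Matrix n r ℝ) (W : Matrix r r ℝ) :
    Uᵀ * F (U * (-Wᵀ) * Uᵀ) * U = -(Uᵀ * F (U * W * Uᵀ) * U)ᵀ := by
  have hconj : U * (-Wᵀ) * Uᵀ = -(U * W * Uᵀ)ᵀ := by
    simp only [transpose_mul, transpose_transpose, Matrix.mul_neg, Matrix.neg_mul,
      Matrix.mul_assoc]
  rw [hconj, apply_neg_transpose hF]
  simp only [transpose_mul, transpose_transpose, Matrix.mul_neg, Matrix.neg_mul,
    Matrix.mul_assoc]

theorem galerkin_transpose_eq_neg (U : Matrix n r ℝ) {W : Matrix r r ℝ} (hW : Wᵀ = -W) :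
    (Uᵀ * F (U * W * Uᵀ) * U)ᵀ = -(Uᵀ * F (U * W * Uᵀ) * U) := by
  rw [← neg_eq_iff_eq_neg, ← galerkin_apply_neg_transpose hF, hW, neg_neg]

end TransposeOdd

theorem stmt11_general {n r : ℕ} (t₀ t₁ : ℝ) (ht : t₀ ≤ t₁) (Lip : ℝ)
    (F : ℝ → Matrix (Fin n) (Fin n) ℝ → Matrix (Fin n) (Fin n) ℝ)
    (hLip : ∀ t, ∀ Y Y' : Matrix (Fin n) (Fin n) ℝ, ‖F t Y - F t Y'‖ ≤ Lip * ‖Y - Y'‖)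
    (hFskew : ∀ t, ∀ Y : Matrix (Fin n) (Fin n) ℝ, (F t Yᵀ)ᵀ = -F t (-Y))
    (U₀ : Matrix (Fin n) (Fin r) ℝ)
    (S₀ : Matrix (Fin r) (Fin r) ℝ) (hS₀ : S₀ᵀ = -S₀)
    -- K-step: K' = F(t, K U₀ᵀ) U₀, K(t₀) = U₀ S₀
    (K : ℝ → Matrix (Fin n) (Fin r) ℝ) (hK0 : K t₀ = U₀ * S₀)
    (hKderiv : ∀ t ∈ Set.Icc t₀ t₁, HasDerivAt K (F t (K t * U₀ᵀ) * U₀) t)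
    -- L-step: L' = F(t, U₀ Lᵀ)ᵀ U₀, L(t₀) = U₀ S₀ᵀ
    (Lm : ℝ → Matrix (Fin n) (Fin r) ℝ) (hL0 : Lm t₀ = U₀ * S₀ᵀ)
    (hLderiv : ∀ t ∈ Set.Icc t₀ t₁, HasDerivAt Lm ((F t (U₀ * (Lm t)ᵀ))ᵀ * U₀) t)
    -- QR of K(t₁): K(t₁) = U₁ R₁; one takes V₁ = U₁ and N = M = U₁ᵀ U₀
    (U₁ : Matrix (Fin n) (Fin r) ℝ)
    -- S-step with V₁ = U₁: S' = U₁ᵀ F(t, U₁ S U₁ᵀ) U₁, S(t₀) = M S₀ Mᵀ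
    (S : ℝ → Matrix (Fin r) (Fin r) ℝ)
    (hSinit : S t₀ = (U₁ᵀ * U₀) * S₀ * (U₁ᵀ * U₀)ᵀ)
    (hSderiv : ∀ t ∈ Set.Icc t₀ t₁, HasDerivAt S (U₁ᵀ * F t (U₁ * S t * U₁ᵀ) * U₁) t) :
    (∀ t ∈ Set.Icc t₀ t₁, Lm t = -K t) ∧
      ((U₁ᵀ * U₀) * S₀ * (U₁ᵀ * U₀)ᵀ)ᵀ = -((U₁ᵀ * U₀) * S₀ * (U₁ᵀ * U₀)ᵀ) ∧
      (∀ t, ∀ W : Matrix (Fin r) (Fin r) ℝ, Wᵀ = -W →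
        (U₁ᵀ * F t (U₁ * W * U₁ᵀ) * U₁)ᵀ = -(U₁ᵀ * F t (U₁ * W * U₁ᵀ) * U₁)) ∧
      (U₁ * S t₁ * U₁ᵀ)ᵀ = -(U₁ * S t₁ * U₁ᵀ) := by
  have hFlip : ∀ t, LipschitzWith Lip.toNNReal (F t) := fun t =>
    LipschitzWith.of_dist_le_mul fun Y Y' => by
      simpa only [dist_eq_norm] using (hLip t Y Y').trans
        (mul_le_mul_of_nonneg_right (Real.le_coe_toNNReal Lip) (norm_nonneg _))
  have hLK : ∀ t ∈ Icc t₀ t₁, Lm t = -K t :=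
    EqOn.comp_of_hasDerivAt_of_intertwines (-ContinuousLinearMap.id ℝ _)
      (fun t => (lipschitzWith_mul_right U₀).comp (lipschitzWith_transpose.comp
        ((hFlip t).comp ((lipschitzWith_mul_left U₀).comp lipschitzWith_transpose))))
      (fun t W => transpose_apply_mul_transpose_neg (hFskew t) U₀ W) hLderiv hKderiv
      (show Lm t₀ = -K t₀ by rw [hL0, hK0, hS₀, Matrix.mul_neg])
  have hM : ((U₁ᵀ * U₀) * S₀ * (U₁ᵀ * U₀)ᵀ)ᵀ = -((U₁ᵀ * U₀) * S₀ * (U₁ᵀ * U₀)ᵀ) :=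
    transpose_mul_mul_transpose_of_transpose_eq_neg hS₀ _
  have hS : S t₁ = -(S t₁)ᵀ :=
    EqOn.comp_of_hasDerivAt_of_intertwines
      (-(transposeLinearEquiv (Fin r) (Fin r) ℝ ℝ).toContinuousLinearEquiv.toContinuousLinearMap)
      (fun t => (lipschitzWith_mul_right U₁).comp ((lipschitzWith_mul_left U₁ᵀ).comp
        ((hFlip t).comp ((lipschitzWith_mul_right U₁ᵀ).comp (lipschitzWith_mul_left U₁)))))
      (fun t W => galerkin_apply_neg_transpose (hFskew t) U₁ W) hSderiv hSderiv
      (show S t₀ = -(S t₀)ᵀ by rw [hSinit, hM, neg_neg]) ⟨ht, le_rfl⟩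
  refine ⟨hLK, hM, fun t W hW => galerkin_transpose_eq_neg (hFskew t) U₁ hW, ?_⟩
  exact transpose_mul_mul_transpose_of_transpose_eq_neg (neg_eq_iff_eq_neg.mpr hS).symm U₁

/-- skew-symmetry preservation of the new low-rank integrator when
`F(t,Yᵀ)ᵀ = −F(t,−Y)`. -/
theorem stmt11 {n r : ℕ} (t₀ t₁ : ℝ) (ht : t₀ ≤ t₁) (Lip : ℝ)
    (F : ℝ → Matrix (Fin n) (Fin n) ℝ → Matrix (Fin n) (Fin n) ℝ)
    (hLip : ∀ t, ∀ Y Y' : Matrix (Fin n) (Fin n) ℝ, ‖F t Y - F t Y'‖ ≤ Lip * ‖Y - Y'‖)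
    (hFskew : ∀ t, ∀ Y : Matrix (Fin n) (Fin n) ℝ, (F t Yᵀ)ᵀ = -F t (-Y))
    (U₀ : Matrix (Fin n) (Fin r) ℝ) (hU₀ : U₀ᵀ * U₀ = 1)
    (S₀ : Matrix (Fin r) (Fin r) ℝ) (hS₀ : S₀ᵀ = -S₀)
    -- K-step: K' = F(t, K U₀ᵀ) U₀, K(t₀) = U₀ S₀
    (K : ℝ → Matrix (Fin n) (Fin r) ℝ) (hK0 : K t₀ = U₀ * S₀)
    (hKderiv : ∀ t ∈ Set.Icc t₀ t₁, HasDerivAt K (F t (K t * U₀ᵀ) * U₀) t)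
    (hKcont : ContinuousOn K (Set.Icc t₀ t₁))
    -- L-step: L' = F(t, U₀ Lᵀ)ᵀ U₀, L(t₀) = U₀ S₀ᵀ
    (Lm : ℝ → Matrix (Fin n) (Fin r) ℝ) (hL0 : Lm t₀ = U₀ * S₀ᵀ)
    (hLderiv : ∀ t ∈ Set.Icc t₀ t₁, HasDerivAt Lm ((F t (U₀ * (Lm t)ᵀ))ᵀ * U₀) t)
    (hLcont : ContinuousOn Lm (Set.Icc t₀ t₁))
    -- QR of K(t₁): K(t₁) = U₁ R₁; one takes V₁ = U₁ and N = M = U₁ᵀ U₀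
    (U₁ : Matrix (Fin n) (Fin r) ℝ) (R₁ : Matrix (Fin r) (Fin r) ℝ)
    (hQR : K t₁ = U₁ * R₁) (hU₁ : U₁ᵀ * U₁ = 1)
    -- S-step with V₁ = U₁: S' = U₁ᵀ F(t, U₁ S U₁ᵀ) U₁, S(t₀) = M S₀ Mᵀ
    (S : ℝ → Matrix (Fin r) (Fin r) ℝ)
    (hSinit : S t₀ = (U₁ᵀ * U₀) * S₀ * (U₁ᵀ * U₀)ᵀ)
    (hSderiv : ∀ t ∈ Set.Icc t₀ t₁, HasDerivAt S (U₁ᵀ * F t (U₁ * S t * U₁ᵀ) * U₁) t) :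
    (∀ t ∈ Set.Icc t₀ t₁, Lm t = -K t) ∧
      ((U₁ᵀ * U₀) * S₀ * (U₁ᵀ * U₀)ᵀ)ᵀ = -((U₁ᵀ * U₀) * S₀ * (U₁ᵀ * U₀)ᵀ) ∧
      (∀ t, ∀ W : Matrix (Fin r) (Fin r) ℝ, Wᵀ = -W →
        (U₁ᵀ * F t (U₁ * W * U₁ᵀ) * U₁)ᵀ = -(U₁ᵀ * F t (U₁ * W * U₁ᵀ) * U₁)) ∧
      (U₁ * S t₁ * U₁ᵀ)ᵀ = -(U₁ * S t₁ * U₁ᵀ) :=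
  stmt11_general t₀ t₁ ht Lip F hLip hFskew U₀ S₀ hS₀ K hK0 hKderiv Lm hL0 hLderiv U₁ S hSinit
    hSderiv
end
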